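/- Every tropical polyhedron with mixed constraints is a tropically convex subset of ℝmaxⁿ; in particular, the solution set in ℝmaxⁿ of any single mixed tropical affine inequality is tropically convex. -/

import Mathlib

attribute [local instance] Classical.propDecidable

/-- The germ semiring `𝔾 = ℝmax ∪ {+∞} ∪ ℝ⁻`: `negInf` is `-∞`, `fin a` is the
real number `a` (an element of `ℝmax`), `germ a` is the germ `a̲ ∈ ℝ⁻`, and
`posInf` is `+∞`. -/
inductive TGerm where
  | negInf : TGerm
  | fin : ℝ → TGerm
  | germ : ℝ → TGerm
  | posInf : TGerm

namespace TGerm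

/-- The modulus `|x| ∈ ℝmax ∪ {+∞} = EReal` of an element of `𝔾`. -/
noncomputable def modulus : TGerm → EReal
  | negInf => ⊥
  | fin a => (a : EReal)
  | germ a => (a : EReal)
  | posInf => ⊤

/-- Whether `x` belongs to the copy `ℝ⁻` of perturbed reals. -/
def isPert : TGerm → Bool
  | germ _ => true
  | _ => false

/-- The total order `≤𝔾` on `𝔾`: `x ≤𝔾 y` iff `|x| < |y|` when
`x ∈ ℝmax ∪ {+∞}` and `y ∈ ℝ⁻`, and `|x| ≤ |y|` otherwise. -/
def gle (x y : TGerm) : Prop :=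
  if isPert x = false ∧ isPert y = true then modulus x < modulus y
  else modulus x ≤ modulus y

/-- The valuation `x(ε) ∈ ℝmax ∪ {+∞} = EReal` of `x ∈ 𝔾` at `ε`. -/
noncomputable def val : TGerm → ℝ → EReal
  | negInf, _ => ⊥
  | fin a, _ => (a : EReal)
  | germ a, ε => ((a - ε : ℝ) : EReal)
  | posInf, _ => ⊤

/-- The addition `⊕` of `𝔾`: the maximum with respect to `≤𝔾`. -/
noncomputable def add (x y : TGerm) : TGerm := if gle x y then y else x

/-- The minimum with respect to `≤𝔾`. -/
noncomputable def gmin (x y : TGerm) : TGerm := if gle x y then x else y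

/-- The tropical sum `⊕ᵢ f i` of a finite family in `𝔾`. -/
noncomputable def gsum {n : ℕ} (f : Fin n → TGerm) : TGerm :=
  (List.ofFn f).foldr add negInf

/-- The minimum (w.r.t. `≤𝔾`) of a finite family in `𝔾`. -/
noncomputable def ginf {n : ℕ} (f : Fin n → TGerm) : TGerm :=
  (List.ofFn f).foldr gmin posInf

/-- The multiplication `⊗` of `𝔾`. -/
def mul : TGerm → TGerm → TGerm
  | negInf, _ => negInf
  | _, negInf => negInf
  | posInf, _ => posInf
  | _, posInf => posInf
  | fin a, fin b => fin (a + b)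
  | fin a, germ b => germ (a + b)
  | germ a, fin b => germ (a + b)
  | germ a, germ b => germ (a + b)

end TGerm

/-- The embedding of `ℝmax = ℝ ∪ {-∞}` into the germ semiring `𝔾`. -/
def toGerm (x : WithBot ℝ) : TGerm := WithBot.recBotCoe TGerm.negInf TGerm.fin x

/-- The embedding of `ℝmax = ℝ ∪ {-∞}` into `ℝmax ∪ {+∞} = EReal`. -/
noncomputable def rmaxToEReal (x : WithBot ℝ) : EReal :=
  WithBot.recBotCoe ⊥ (fun a : ℝ => (a : EReal)) x

/-- A point `x ∈ ℝmaxⁿ` satisfies the mixed tropical affine inequality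
`a₀ ⊕ a₁x₁ ⊕ ⋯ ⊕ aₙxₙ ≤𝔾 b₀ ⊕ b₁x₁ ⊕ ⋯ ⊕ bₙxₙ`. -/
noncomputable def SatisfiesMixed {n : ℕ} (a₀ : WithBot ℝ) (a : Fin n → WithBot ℝ)
    (b₀ : TGerm) (b : Fin n → TGerm) (x : Fin n → WithBot ℝ) : Prop :=
  (TGerm.add (toGerm a₀) (TGerm.gsum fun i => (toGerm (a i)).mul (toGerm (x i)))).gle
    (TGerm.add b₀ (TGerm.gsum fun i => (b i).mul (toGerm (x i))))

/-- A subset of `ℝmaxⁿ` is tropically convex. -/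
def TropConvex {n : ℕ} (C : Set (Fin n → WithBot ℝ)) : Prop :=
  ∀ u ∈ C, ∀ v ∈ C, ∀ lam mu : WithBot ℝ, max lam mu = 0 →
    (fun i => max (lam + u i) (mu + v i)) ∈ C

/-!
The order `≤𝔾` is the lexicographic order on `(|x|, x ∉ ℝ⁻)`, hence linear, and `⊕` is its
maximum. Multiplication by a fixed element of `𝔾` is monotone, so it distributes over `⊕` and
over finite tropical sums. Consequently an affine form `F x = c₀ ⊕ ⊕ᵢ cᵢ xᵢ` with arbitrary
coefficients in `𝔾` satisfies `F (λu ⊕ μv) = λ F u ⊕ μ F v` whenever `λ ⊕ μ = 0` (the constant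
term survives as `λ c₀ ⊕ μ c₀ = c₀`), and a mixed inequality `F u ≤𝔾 G u`, `F v ≤𝔾 G v` passes to
`λu ⊕ μv` because `(s, t) ↦ λ s ⊕ μ t` is monotone.
-/

namespace TGerm

noncomputable def key (x : TGerm) : EReal ×ₗ Bool := toLex (modulus x, !isPert x)

theorem key_injective : Function.Injective key := by
  intro x y h
  cases x <;> cases y <;> simp_all [key, modulus, isPert]

noncomputable instance : LinearOrder TGerm := LinearOrder.lift' key key_injective

theorem gle_iff_le {x y : TGerm} : gle x y ↔ x ≤ y := by
  change _ ↔ key x ≤ key y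
  unfold gle key
  rw [Prod.Lex.toLex_le_toLex]
  cases hx : isPert x <;> cases hy : isPert y <;> simp [le_iff_lt_or_eq]

instance : OrderBot TGerm where
  bot := negInf
  bot_le y := gle_iff_le.1 (by cases y <;> simp [gle, isPert, modulus])

theorem add_eq_max (x y : TGerm) : add x y = max x y := by
  unfold add
  split_ifs with h
  · exact (max_eq_right (gle_iff_le.1 h)).symm
  · exact (max_eq_left (le_of_not_ge (mt gle_iff_le.2 h))).symm

theorem gsum_eq_sup {n : ℕ} (f : Fin n → TGerm) : gsum f = Finset.univ.sup f := by
  induction n with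
  | zero => rfl
  | succ n ih =>
    rw [gsum, List.ofFn_succ, List.foldr_cons, ← gsum, ih, add_eq_max, Fin.univ_succ,
      Finset.sup_cons, Finset.sup_map]
    rfl

theorem mul_comm (x y : TGerm) : mul x y = mul y x := by
  cases x <;> cases y <;> simp [mul, add_comm]

theorem mul_left_comm (x y z : TGerm) : mul x (mul y z) = mul y (mul x z) := by
  cases x <;> cases y <;> cases z <;> simp only [mul] <;> ring_nf

theorem mul_bot (x : TGerm) : mul x ⊥ = ⊥ := by
  cases x <;> rfl

theorem mul_right_mono (c : TGerm) : Monotone (mul c) := by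
  intro x y h
  rw [← gle_iff_le] at h ⊢
  cases c <;> cases x <;> cases y <;>
    simp_all [mul, gle, isPert, modulus, -EReal.coe_add, le_of_lt]

theorem mul_max (c x y : TGerm) : mul c (max x y) = max (mul c x) (mul c y) :=
  (mul_right_mono c).map_max

theorem max_mul (x y c : TGerm) : mul (max x y) c = max (mul x c) (mul y c) := by
  simp only [mul_comm _ c, mul_max]

theorem mul_gsum {n : ℕ} (c : TGerm) (f : Fin n → TGerm) :
    mul c (gsum f) = gsum fun i => mul c (f i) := by
  simp only [gsum_eq_sup]
  exact Finset.apply_sup_eq_sup_comp_of_linearOrder _ (mul_right_mono c) (mul_bot c)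

theorem gsum_max {n : ℕ} (f g : Fin n → TGerm) :
    (gsum fun i => max (f i) (g i)) = max (gsum f) (gsum g) := by
  simp only [gsum_eq_sup]
  exact Finset.sup_sup

end TGerm

theorem toGerm_mono : Monotone toGerm := by
  intro s t h
  rw [← TGerm.gle_iff_le]
  induction s using WithBot.recBotCoe with
  | bot => exact TGerm.gle_iff_le.2 bot_le
  | coe a =>
    induction t using WithBot.recBotCoe with
    | bot => exact absurd h (by simp)
    | coe b => simpa [toGerm, TGerm.gle, TGerm.isPert, TGerm.modulus] using h

theorem toGerm_max (s t : WithBot ℝ) : toGerm (max s t) = max (toGerm s) (toGerm t) :=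
  toGerm_mono.map_max

theorem toGerm_add (s t : WithBot ℝ) : toGerm (s + t) = (toGerm s).mul (toGerm t) := by
  induction s using WithBot.recBotCoe <;> induction t using WithBot.recBotCoe <;> rfl

theorem toGerm_zero_mul (x : TGerm) : (toGerm 0).mul x = x := by
  change (TGerm.fin 0).mul x = x
  cases x <;> simp [TGerm.mul]

open TGerm

noncomputable def affineForm {n : ℕ} (c₀ : TGerm) (c : Fin n → TGerm) (x : Fin n → WithBot ℝ) :
    TGerm :=
  add c₀ (gsum fun i => (c i).mul (toGerm (x i)))

theorem affineForm_max_add {n : ℕ} (c₀ : TGerm) (c : Fin n → TGerm) (u v : Fin n → WithBot ℝ)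
    {lam mu : WithBot ℝ} (h : max lam mu = 0) :
    affineForm c₀ c (fun i => max (lam + u i) (mu + v i)) =
      max ((toGerm lam).mul (affineForm c₀ c u)) ((toGerm mu).mul (affineForm c₀ c v)) := by
  have hc₀ : max ((toGerm lam).mul c₀) ((toGerm mu).mul c₀) = c₀ := by
    rw [← max_mul, ← toGerm_max, h, toGerm_zero_mul]
  simp only [affineForm, add_eq_max, mul_max, toGerm_max, toGerm_add, TGerm.mul_left_comm (c _),
    gsum_max, ← mul_gsum]
  rw [max_max_max_comm, hc₀]

theorem satisfiesMixed_iff {n : ℕ} {a₀ : WithBot ℝ} {a : Fin n → WithBot ℝ} {b₀ : TGerm}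
    {b : Fin n → TGerm} {x : Fin n → WithBot ℝ} :
    SatisfiesMixed a₀ a b₀ b x ↔
      affineForm (toGerm a₀) (fun i => toGerm (a i)) x ≤ affineForm b₀ b x :=
  gle_iff_le

theorem satisfiesMixed_max_add {n : ℕ} {a₀ : WithBot ℝ} {a : Fin n → WithBot ℝ} {b₀ : TGerm}
    {b : Fin n → TGerm} {u v : Fin n → WithBot ℝ} {lam mu : WithBot ℝ} (h : max lam mu = 0)
    (hu : SatisfiesMixed a₀ a b₀ b u) (hv : SatisfiesMixed a₀ a b₀ b v) :
    SatisfiesMixed a₀ a b₀ b fun i => max (lam + u i) (mu + v i) := by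
  rw [satisfiesMixed_iff] at hu hv ⊢
  rw [affineForm_max_add _ _ _ _ h, affineForm_max_add _ _ _ _ h]
  exact max_le_max (mul_right_mono _ hu) (mul_right_mono _ hv)

theorem TropConvex.setOf_forall {n : ℕ} {ι : Type*} {P : ι → (Fin n → WithBot ℝ) → Prop}
    (h : ∀ k, TropConvex {x | P k x}) : TropConvex {x | ∀ k, P k x} :=
  fun _ hu _ hv _ _ hmax k => h k _ (hu k) _ (hv k) _ _ hmax

theorem tropConvex_setOf_satisfiesMixed {n : ℕ} (a₀ : WithBot ℝ) (a : Fin n → WithBot ℝ)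
    (b₀ : TGerm) (b : Fin n → TGerm) : TropConvex {x | SatisfiesMixed a₀ a b₀ b x} :=
  fun _ hu _ hv _ _ hmax => satisfiesMixed_max_add hmax hu hv

theorem statement_5 (n p : ℕ) (a₀ : Fin p → WithBot ℝ) (a : Fin p → Fin n → WithBot ℝ)
    (b₀ : Fin p → TGerm) (b : Fin p → Fin n → TGerm) :
    TropConvex { x | ∀ k : Fin p, SatisfiesMixed (a₀ k) (a k) (b₀ k) (b k) x } ∧
    ∀ (a₀' : WithBot ℝ) (a' : Fin n → WithBot ℝ) (b₀' : TGerm) (b' : Fin n → TGerm),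
      TropConvex { x | SatisfiesMixed a₀' a' b₀' b' x } :=
  ⟨TropConvex.setOf_forall fun _ => tropConvex_setOf_satisfiesMixed _ _ _ _,
    tropConvex_setOf_satisfiesMixed⟩
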